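/- Let G be a finite simple graph, let f be a γ_R-function on G, and let V_i = {v ∈ V(G) : f(v) = i} for i ∈ {0,1,2}. If v ∈ V_2 has no neighbour in V_2 and has precisely one external private neighbour w with respect to V_2, then no neighbour of w lies in V_1. -/

import Mathlib

open SimpleGraph

/-- The closed neighbourhood `N[v]` of a vertex `v`: `v` together with its neighbours. -/
def closedNbhd {V : Type*} (G : SimpleGraph V) (v : V) : Set V :=
  insert v (G.neighborSet v)

/-- A Roman dominating function on `G`: a map into `{0,1,2}` such that every vertex with
value `0` has a neighbour with value `2`. -/
def IsRomanDominating {V : Type*} (G : SimpleGraph V) (f : V → ℕ) : Prop :=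
  (∀ v, f v ≤ 2) ∧ ∀ v, f v = 0 → ∃ u, G.Adj v u ∧ f u = 2

/-- The Roman domination number `γ_R(G)`: the minimum weight of a Roman dominating
function on `G`. -/
noncomputable def romanNumber {V : Type*} [Fintype V] (G : SimpleGraph V) : ℕ :=
  sInf {w | ∃ f : V → ℕ, IsRomanDominating G f ∧ ∑ v, f v = w}

/-- A two-neighbour packing of `G`: a set of vertices such that every closed
neighbourhood contains at most two of its members. -/
def IsTwoNbrPacking {V : Type*} (G : SimpleGraph V) (A : Set V) : Prop :=
  ∀ v, (closedNbhd G v ∩ A).ncard ≤ 2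

/-- The two-neighbour packing number `γ̄_R(G)`: the maximum size of a two-neighbour
packing of `G`. -/
noncomputable def tnpNumber {V : Type*} [Fintype V] (G : SimpleGraph V) : ℕ :=
  sSup {n | ∃ A : Set V, IsTwoNbrPacking G A ∧ A.ncard = n}

/-- `u` is a private neighbour of `v` with respect to `V₂`: `u ∈ N[v]` but `u ∉ N[v']`
for every `v' ∈ V₂ \ {v}`. -/
def IsPrivateNbr {V : Type*} (G : SimpleGraph V) (V₂ : Set V) (u v : V) : Prop :=
  u ∈ closedNbhd G v ∧ ∀ v' ∈ V₂, v' ≠ v → u ∉ closedNbhd G v'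

/-! Move the `2` from `v` to `w` and then lower `u` from `1` to `0`. Every vertex of value `0`
that relied on `v` alone is a private neighbour of `v`, hence is `w`, which now carries the `2`;
`v` and `u` are neighbours of `w`. The result is Roman dominating of weight
`∑ f - f w - 1 < ∑ f`, contradicting minimality. -/

theorem Fintype.sum_update_add {ι M : Type*} [Fintype ι] [DecidableEq ι] [AddCommMonoid M]
    (f : ι → M) (i : ι) (b : M) :
    ∑ x, Function.update f i b x + f i = ∑ x, f x + b := by
  rw [Finset.sum_update_of_mem (Finset.mem_univ i), add_assoc,
    Finset.sum_eq_sum_sdiff_singleton_add (Finset.mem_univ i) f, add_comm]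

theorem romanNumber_le_sum {V : Type*} [Fintype V] {G : SimpleGraph V} {f : V → ℕ}
    (hf : IsRomanDominating G f) : romanNumber G ≤ ∑ v, f v :=
  Nat.sInf_le ⟨f, hf, rfl⟩

theorem adj_of_mem_closedNbhd {V : Type*} {G : SimpleGraph V} {u v : V}
    (hu : u ∈ closedNbhd G v) (huv : u ≠ v) : G.Adj v u :=
  hu.resolve_left huv

namespace IsRomanDominating

variable {V : Type*} {G : SimpleGraph V} {f : V → ℕ}

theorem exists_adj_ne_of_not_isPrivateNbr (hf : IsRomanDominating G f) {v z : V}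
    (hz : f z = 0) (hpn : ¬ IsPrivateNbr G {x | f x = 2} z v) :
    ∃ t, t ≠ v ∧ G.Adj z t ∧ f t = 2 := by
  obtain ⟨y, hzy, hy⟩ := hf.2 z hz
  by_cases hyv : y = v
  · subst hyv
    have hzN : z ∈ closedNbhd G y := Or.inr hzy.symm
    simp only [IsPrivateNbr, hzN, true_and, not_forall, not_not] at hpn
    obtain ⟨t, ht, hty, hzt⟩ := hpn
    have hzt' : z ≠ t := by rintro rfl; simp_all
    exact ⟨t, hty, (adj_of_mem_closedNbhd hzt hzt').symm, ht⟩
  · exact ⟨y, hyv, hzy, hy⟩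

variable [DecidableEq V]

theorem update_two (hf : IsRomanDominating G f) (w : V) :
    IsRomanDominating G (Function.update f w 2) := by
  refine ⟨fun x => ?_, fun z hz => ?_⟩
  · rcases eq_or_ne x w with rfl | hxw <;> simp_all [hf.1 x]
  · have hzw : z ≠ w := by rintro rfl; simp at hz
    rw [Function.update_of_ne hzw] at hz
    obtain ⟨y, hzy, hy⟩ := hf.2 z hz
    exact ⟨y, hzy, by rcases eq_or_ne y w with rfl | hyw <;> simp_all⟩

theorem update_zero (hf : IsRomanDominating G f) {x y : V} (hxy : G.Adj x y) (hy : f y = 2)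
    (hdom : ∀ z, z ≠ x → f z = 0 → ∃ t, t ≠ x ∧ G.Adj z t ∧ f t = 2) :
    IsRomanDominating G (Function.update f x 0) := by
  refine ⟨fun z => ?_, fun z hz => ?_⟩
  · rcases eq_or_ne z x with rfl | hzx <;> simp_all [hf.1 z]
  · rcases eq_or_ne z x with rfl | hzx
    · exact ⟨y, hxy, by rwa [Function.update_of_ne hxy.ne.symm]⟩
    · rw [Function.update_of_ne hzx] at hz
      obtain ⟨t, htx, hzt, ht⟩ := hdom z hzx hz
      exact ⟨t, hzt, by rwa [Function.update_of_ne htx]⟩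

theorem update_zero_of_ne_two (hf : IsRomanDominating G f) {x y : V} (hx : f x ≠ 2)
    (hxy : G.Adj x y) (hy : f y = 2) : IsRomanDominating G (Function.update f x 0) :=
  hf.update_zero hxy hy fun z _ hz => by
    obtain ⟨t, hzt, ht⟩ := hf.2 z hz
    exact ⟨t, fun h => hx (h ▸ ht), hzt, ht⟩

theorem update_two_update_zero (hf : IsRomanDominating G f) {v w : V} (hvw : G.Adj v w)
    (hpn : ∀ z, z ≠ w → f z = 0 → ¬ IsPrivateNbr G {x | f x = 2} z v) :
    IsRomanDominating G (Function.update (Function.update f w 2) v 0) := by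
  refine (hf.update_two w).update_zero hvw (by simp) fun z hzv hz => ?_
  have hzw : z ≠ w := by rintro rfl; simp at hz
  rw [Function.update_of_ne hzw] at hz
  obtain ⟨t, htv, hzt, ht⟩ := hf.exists_adj_ne_of_not_isPrivateNbr hz (hpn z hzw hz)
  exact ⟨t, htv, hzt, by rcases eq_or_ne t w with rfl | htw <;> simp_all⟩

end IsRomanDominating

theorem isolated_in_V2_unique_external_pn_general {V : Type*} [Fintype V] (G : SimpleGraph V)
    (f : V → ℕ) (hf : IsRomanDominating G f) (hmin : ∑ v, f v = romanNumber G)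
    (v : V) (hv : f v = 2)
    (w : V)
    (hw : {u : V | IsPrivateNbr G {x : V | f x = 2} u v ∧ f u ≠ 2} = {w}) :
    ∀ u, G.Adj w u → f u ≠ 1 := by
  classical
  intro u hwu hu
  obtain ⟨⟨hwN, -⟩, hw2⟩ := hw.symm.subset (Set.mem_singleton w)
  have hvw : G.Adj v w := adj_of_mem_closedNbhd hwN fun h => hw2 (h ▸ hv)
  have hpn : ∀ z, z ≠ w → f z = 0 → ¬ IsPrivateNbr G {x | f x = 2} z v :=
    fun z hzw hz hz' => hzw (hw.subset ⟨hz', by omega⟩)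
  have huv : u ≠ v := by rintro rfl; omega
  set g₁ := Function.update (Function.update f w 2) v 0
  have hg₁ : IsRomanDominating G g₁ := hf.update_two_update_zero hvw hpn
  have hg₁u : g₁ u = 1 := by simp [g₁, huv, hwu.ne.symm, hu]
  have hg : IsRomanDominating G (Function.update g₁ u 0) :=
    hg₁.update_zero_of_ne_two (by omega) hwu.symm (by simp [g₁, hvw.ne.symm])
  have hlt : ∑ x, Function.update g₁ u 0 x < ∑ x, f x := by
    have h₁ := Fintype.sum_update_add g₁ u 0
    have h₂ : ∑ x, g₁ x + f v = ∑ x, Function.update f w 2 x + 0 := by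
      simpa only [Function.update_of_ne hvw.ne] using Fintype.sum_update_add (Function.update f w 2) v 0
    have h₃ := Fintype.sum_update_add f w 2
    omega
  exact absurd (hmin ▸ romanNumber_le_sum hg) (not_le.mpr hlt)

theorem isolated_in_V2_unique_external_pn {V : Type*} [Fintype V] (G : SimpleGraph V)
    (f : V → ℕ) (hf : IsRomanDominating G f) (hmin : ∑ v, f v = romanNumber G)
    (v : V) (hv : f v = 2)
    (hiso : ∀ u, G.Adj v u → f u ≠ 2)
    (w : V)
    (hw : {u : V | IsPrivateNbr G {x : V | f x = 2} u v ∧ f u ≠ 2} = {w}) :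
    ∀ u, G.Adj w u → f u ≠ 1 :=
  isolated_in_V2_unique_external_pn_general G f hf hmin v hv w hw
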